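/- On a 4-dimensional hypercomplex manifold (M,I,J,K), every hyperhermitian metric g is Einstein–Weyl with respect to the Obata connection; in particular there exists a 1-form ω such that ∇^Ob g = ω ⊗ g, and consequently dF_I = ω ∧ F_I, dF_J = ω ∧ F_J and dF_K = ω ∧ F_K. -/

import Mathlib

noncomputable section

open Function

namespace HKTPaper

variable {E : Type*} [NormedAddCommGroup E] [NormedSpace ℝ E] [FiniteDimensional ℝ E]

/-- Exterior derivative of a function, in flat coordinates. -/
def d0 (f : E → ℝ) : E → E → ℝ := fun x u => fderiv ℝ f x u

/-- Exterior derivative of a 1-form (evaluated on constant vector fields), flat coordinates. -/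
def d1 (θ : E → E → ℝ) : E → E → E → ℝ := fun x u v =>
  fderiv ℝ (fun y => θ y v) x u - fderiv ℝ (fun y => θ y u) x v

/-- Exterior derivative of a 2-form, flat coordinates. -/
def d2 (F : E → E → E → ℝ) : E → E → E → E → ℝ := fun x u v w =>
  fderiv ℝ (fun y => F y v w) x u - fderiv ℝ (fun y => F y u w) x v
    + fderiv ℝ (fun y => F y u v) x w

variable {P : Type*}

/-- Action of an almost complex structure on 1-forms: `(𝓘θ)(X) = -θ(𝓘X)`. -/
def act1 (I : P → E →L[ℝ] E) (θ : P → E → ℝ) : P → E → ℝ := fun x u => -θ x (I x u)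

/-- Action of an almost complex structure on 2-forms: `(𝓘ω)(X,Y) = ω(𝓘X,𝓘Y)`. -/
def act2 (I : P → E →L[ℝ] E) (F : P → E → E → ℝ) : P → E → E → ℝ := fun x u v =>
  F x (I x u) (I x v)

/-- Action of an almost complex structure on 3-forms: `(𝓘ω)(X,Y,Z) = -ω(𝓘X,𝓘Y,𝓘Z)`. -/
def act3 (I : P → E →L[ℝ] E) (G : P → E → E → E → ℝ) : P → E → E → E → ℝ := fun x u v w =>
  -G x (I x u) (I x v) (I x w)

/-- `d_𝓘` on functions: `d_𝓘 f = 𝓘 d (𝓘 f)`. -/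
def dc0 (I : E → E →L[ℝ] E) (f : E → ℝ) : E → E → ℝ := act1 I (d0 f)

/-- `d_𝓘` on 1-forms: `d_𝓘 θ = (-1)¹ 𝓘 d (𝓘 θ)`. -/
def dc1 (I : E → E →L[ℝ] E) (θ : E → E → ℝ) : E → E → E → ℝ := fun x u v =>
  -(act2 I (d1 (act1 I θ)) x u v)

/-- Lie bracket of vector fields, flat coordinates. -/
def lieBracket (X Y : E → E) : E → E := fun x => fderiv ℝ Y x (X x) - fderiv ℝ X x (Y x)

/-- Nijenhuis tensor `N(X,Y) = [𝓘X,𝓘Y] - 𝓘[𝓘X,Y] - 𝓘[X,𝓘Y] - [X,Y]` evaluated on the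
constant vector fields with values `u`, `v`. -/
def nijTensor (I : E → E →L[ℝ] E) (u v : E) : E → E := fun x =>
  lieBracket (fun y => I y u) (fun y => I y v) x
    - I x (lieBracket (fun y => I y u) (fun _ => v) x)
    - I x (lieBracket (fun _ => u) (fun y => I y v) x)
    - lieBracket (fun _ => u) (fun _ => v) x

/-- An almost complex structure on an open set `U`. -/
structure IsAcsOn (U : Set E) (I : E → E →L[ℝ] E) : Prop where
  smooth : ContDiffOn ℝ (⊤ : ℕ∞) I U
  square : ∀ x ∈ U, ∀ v, I x (I x v) = -v

/-- Integrability (vanishing of the Nijenhuis tensor). -/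
def IntegrableOn (U : Set E) (I : E → E →L[ℝ] E) : Prop :=
  ∀ u v : E, ∀ x ∈ U, nijTensor I u v x = 0

/-- A hypercomplex structure on an open set `U`: three integrable almost complex structures
with `IJ = -JI = K`. -/
structure IsHypercomplexOn (U : Set E) (I J K : E → E →L[ℝ] E) : Prop where
  acsI : IsAcsOn U I
  acsJ : IsAcsOn U J
  acsK : IsAcsOn U K
  mulIJ : ∀ x ∈ U, ∀ v, I x (J x v) = K x v
  mulJI : ∀ x ∈ U, ∀ v, J x (I x v) = -(K x v)
  intI : IntegrableOn U I
  intJ : IntegrableOn U J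
  intK : IntegrableOn U K

/-- A hyperhermitian (possibly indefinite) metric on `U`. -/
structure IsHyperHermitianOn (U : Set E) (I J K : E → E →L[ℝ] E)
    (g : E → E →ₗ[ℝ] E →ₗ[ℝ] ℝ) : Prop where
  smooth : ∀ u v : E, ContDiffOn ℝ (⊤ : ℕ∞) (fun x => g x u v) U
  symm : ∀ x ∈ U, ∀ u v, g x u v = g x v u
  nondeg : ∀ x ∈ U, ∀ u, (∀ v, g x u v = 0) → u = 0
  hermI : ∀ x ∈ U, ∀ u v, g x (I x u) (I x v) = g x u v
  hermJ : ∀ x ∈ U, ∀ u v, g x (J x u) (J x v) = g x u v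
  hermK : ∀ x ∈ U, ∀ u v, g x (K x u) (K x v) = g x u v

/-- The Kähler form `F_𝓘 = g(𝓘·,·)`. -/
def kaehlerForm (I : E → E →L[ℝ] E) (g : E → E →ₗ[ℝ] E →ₗ[ℝ] ℝ) : E → E → E → ℝ :=
  fun x u v => g x (I x u) v

/-- The HKT condition `I dF_I = J dF_J = K dF_K` on `U`. -/
def IsHKTOn (U : Set E) (I J K : E → E →L[ℝ] E) (g : E → E →ₗ[ℝ] E →ₗ[ℝ] ℝ) : Prop :=
  (∀ x ∈ U, ∀ u v w, act3 I (d2 (kaehlerForm I g)) x u v w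
      = act3 J (d2 (kaehlerForm J g)) x u v w) ∧
  (∀ x ∈ U, ∀ u v w, act3 J (d2 (kaehlerForm J g)) x u v w
      = act3 K (d2 (kaehlerForm K g)) x u v w)

/-- `μ` is an HKT potential for `g` on `U`:
`F_I = ½(dd_I + d_J d_K)μ`, `F_J = ½(dd_J + d_K d_I)μ`, `F_K = ½(dd_K + d_I d_J)μ`. -/
def IsHKTPotentialOn (U : Set E) (I J K : E → E →L[ℝ] E)
    (g : E → E →ₗ[ℝ] E →ₗ[ℝ] ℝ) (μ : E → ℝ) : Prop :=
  ∀ x ∈ U, ∀ u v,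
    kaehlerForm I g x u v = (1 / 2) * (d1 (dc0 I μ) x u v + dc1 J (dc0 K μ) x u v) ∧
    kaehlerForm J g x u v = (1 / 2) * (d1 (dc0 J μ) x u v + dc1 K (dc0 I μ) x u v) ∧
    kaehlerForm K g x u v = (1 / 2) * (d1 (dc0 K μ) x u v + dc1 I (dc0 J μ) x u v)

end HKTPaper

namespace HKTPaper

variable {E : Type*} [NormedAddCommGroup E] [NormedSpace ℝ E] [FiniteDimensional ℝ E]

/-- The Obata connection, recorded by its Christoffel tensor `Γ`:
`∇_u Y = D_u Y + Γ(u, Y)`. -/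
structure IsObataOn (U : Set E) (I J K : E → E →L[ℝ] E)
    (Γ : E → E →L[ℝ] E →L[ℝ] E) : Prop where
  torsionFree : ∀ x ∈ U, ∀ u v, Γ x u v = Γ x v u
  parI : ∀ x ∈ U, ∀ u v, fderiv ℝ (fun y => I y v) x u + Γ x u (I x v) = I x (Γ x u v)
  parJ : ∀ x ∈ U, ∀ u v, fderiv ℝ (fun y => J y v) x u + Γ x u (J x v) = J x (Γ x u v)
  parK : ∀ x ∈ U, ∀ u v, fderiv ℝ (fun y => K y v) x u + Γ x u (K x v) = K x (Γ x u v)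

/-- Curvature tensor `R(u,v)w` of the connection with Christoffel tensor `Γ`, in flat
coordinates (evaluated on constant vector fields). -/
def curv (Γ : E → E →L[ℝ] E →L[ℝ] E) : E → E → E → E → E := fun x u v w =>
  fderiv ℝ (fun y => Γ y v w) x u - fderiv ℝ (fun y => Γ y u w) x v
    + Γ x u (Γ x v w) - Γ x v (Γ x u w)

/-- The Ricci tensor `Ric(v,w) = Trace (u ↦ R(u,v)w)`, computed in a basis `b`. -/
def ricci (Γ : E → E →L[ℝ] E →L[ℝ] E) (b : Module.Basis (Fin 4) ℝ E) : E → E → E → ℝ :=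
  fun x v w => ∑ i, b.repr (curv Γ x (b i) v w) i

/-- Wedge product of a 1-form and a 2-form:
`(ω ∧ F)(u,v,w) = ω(u)F(v,w) - ω(v)F(u,w) + ω(w)F(u,v)`. -/
def wedge12 (ω : E → E → ℝ) (F : E → E → E → ℝ) : E → E → E → E → ℝ := fun x u v w =>
  ω x u * F x v w - ω x v * F x u w + ω x w * F x u v

end HKTPaper

/-!
The Obata connection is given by an explicit formula in `I, J, K` and their first derivatives,
so it is smooth. As `I, J, K` are parallel, `∇_u g` is, for every `u`, again a symmetric form
invariant under `I, J, K`. In dimension four, `u, Iu, Ju, Ku` is a basis for any `u ≠ 0`, and it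
is orthogonal with equal squares for every such form; hence all such forms are proportional to
`g`, which gives `∇g = ω ⊗ g`. Then `∇F_A = ω ⊗ F_A` for `A = I, J, K`, and since the connection
is torsion-free, `dF_A` is the alternation of `∇F_A`, that is `ω ∧ F_A`. Finally the curvature
commutes with `I, J, K`; together with the Bianchi identity this makes the Ricci tensor
skew-symmetric, so its symmetrisation is `0 · g`.
-/

namespace HKTPaper

open Module Topology

section LinearAlgebra

variable {E : Type*} [NormedAddCommGroup E] [NormedSpace ℝ E]

structure IsQuaternionTriple (I J K : E →L[ℝ] E) : Prop where
  I_sq : ∀ v, I (I v) = -v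
  J_sq : ∀ v, J (J v) = -v
  IJ : ∀ v, I (J v) = K v
  JI : ∀ v, J (I v) = -(K v)

namespace IsQuaternionTriple

variable {I J K : E →L[ℝ] E}

theorem IK (q : IsQuaternionTriple I J K) (v : E) : I (K v) = -(J v) := by
  rw [← q.IJ, q.I_sq]

theorem KJ (q : IsQuaternionTriple I J K) (v : E) : K (J v) = -(I v) := by
  rw [← q.IJ, q.J_sq, map_neg]

theorem KI (q : IsQuaternionTriple I J K) (v : E) : K (I v) = J v := by
  rw [← q.IJ, q.JI, map_neg, q.IK, neg_neg]

theorem JK (q : IsQuaternionTriple I J K) (v : E) : J (K v) = I v := by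
  rw [← q.IJ, q.JI, q.KJ, neg_neg]

theorem K_sq (q : IsQuaternionTriple I J K) (v : E) : K (K v) = -v := by
  rw [← q.IJ, q.JK, q.I_sq]

theorem linearIndependent (q : IsQuaternionTriple I J K) {u : E} (hu : u ≠ 0) :
    LinearIndependent ℝ ![u, I u, J u, K u] := by
  rw [Fintype.linearIndependent_iff]
  intro c hc
  simp only [Fin.sum_univ_four, Matrix.cons_val] at hc
  -- applying the conjugate quaternion `c 0 - c 1 I - c 2 J - c 3 K` leaves `|c|² u`
  have hnorm : (∑ i, c i ^ 2) • u = 0 := by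
    have h := congrArg (fun s => c 0 • s - c 1 • I s - c 2 • J s - c 3 • K s) hc
    simp only [map_add, map_smul, map_zero, smul_zero, sub_zero, q.I_sq, q.J_sq, q.K_sq, q.IJ,
      q.JI, q.IK, q.KI, q.JK, q.KJ] at h
    rw [Fin.sum_univ_four]
    linear_combination (norm := module) h
  have hsum := (Finset.sum_eq_zero_iff_of_nonneg fun i _ => sq_nonneg (c i)).mp
    ((smul_eq_zero.mp hnorm).resolve_right hu)
  exact fun i => pow_eq_zero_iff two_ne_zero |>.mp (hsum i (Finset.mem_univ i))

end IsQuaternionTriple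

theorem apply_map_self_eq_zero {B : LinearMap.BilinForm ℝ E} {A : E →L[ℝ] E}
    (hB : ∀ u v, B u v = B v u) (hBA : ∀ u v, B (A u) (A v) = B u v) (hA : ∀ v, A (A v) = -v)
    (u : E) : B u (A u) = 0 := by
  have h := hBA u (A u)
  rw [hA, map_neg, hB] at h
  linarith

structure IsHyperhermitian (I J : E →L[ℝ] E) (B : LinearMap.BilinForm ℝ E) : Prop where
  symm : ∀ u v, B u v = B v u
  map_I : ∀ u v, B (I u) (I v) = B u v
  map_J : ∀ u v, B (J u) (J v) = B u v

namespace IsHyperhermitian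

variable {I J K : E →L[ℝ] E} {B g h : LinearMap.BilinForm ℝ E}

theorem map_K (hB : IsHyperhermitian I J B) (q : IsQuaternionTriple I J K) (u v : E) :
    B (K u) (K v) = B u v := by
  rw [← q.IJ, ← q.IJ, hB.map_I, hB.map_J]

theorem smul_sub_smul (hg : IsHyperhermitian I J g) (hh : IsHyperhermitian I J h) (a b : ℝ) :
    IsHyperhermitian I J (a • h - b • g) where
  symm u v := by simp [hg.symm u v, hh.symm u v]
  map_I u v := by simp [hg.map_I, hh.map_I]
  map_J u v := by simp [hg.map_J, hh.map_J]

theorem eq_zero_of_apply_self_eq_zero (hB : IsHyperhermitian I J B) (q : IsQuaternionTriple I J K)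
    (hdim : finrank ℝ E = 4) {u : E} (hu : u ≠ 0) (hBu : B u u = 0) : B = 0 := by
  let b : Basis (Fin 4) ℝ E :=
    basisOfLinearIndependentOfCardEqFinrank (q.linearIndependent hu) (by simp [hdim])
  have hb : ⇑b = ![u, I u, J u, K u] := coe_basisOfLinearIndependentOfCardEqFinrank _ _
  have hI := apply_map_self_eq_zero hB.symm hB.map_I q.I_sq
  have hJ := apply_map_self_eq_zero hB.symm hB.map_J q.J_sq
  have hK := apply_map_self_eq_zero hB.symm (hB.map_K q) q.K_sq
  have hIJ : B (I u) (J u) = 0 := by rw [← q.KI]; exact hK _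
  have hIK : B (I u) (K u) = 0 := by rw [← neg_neg (K u), ← q.JI, map_neg, hJ, neg_zero]
  have hJK : B (J u) (K u) = 0 := by rw [← q.IJ]; exact hI _
  refine LinearMap.BilinForm.ext_basis b fun i j => ?_
  fin_cases i <;> fin_cases j <;>
    simp [hb, hBu, hB.map_I, hB.map_J, hB.map_K q, hI, hJ, hK, hIJ, hIK, hJK,
      hB.symm _ u, hB.symm (J u) (I u), hB.symm (K u) (I u), hB.symm (K u) (J u)]

theorem apply_self_ne_zero (hB : IsHyperhermitian I J B) (q : IsQuaternionTriple I J K)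
    (hdim : finrank ℝ E = 4) (hnd : ∀ u, (∀ v, B u v = 0) → u = 0) {u : E} (hu : u ≠ 0) :
    B u u ≠ 0 := fun hBu =>
  hu (hnd u fun v => by rw [hB.eq_zero_of_apply_self_eq_zero q hdim hu hBu, LinearMap.zero_apply,
    LinearMap.zero_apply])

theorem eq_smul (hg : IsHyperhermitian I J g) (hh : IsHyperhermitian I J h)
    (q : IsQuaternionTriple I J K) (hdim : finrank ℝ E = 4) {u : E} (hgu : g u u ≠ 0) :
    h = (h u u / g u u) • g := by
  have hu : u ≠ 0 := by rintro rfl; simp at hgu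
  have h0 := (hg.smul_sub_smul hh (g u u) (h u u)).eq_zero_of_apply_self_eq_zero q hdim hu
    (by simp [mul_comm])
  have h1 : g u u • h = h u u • g := sub_eq_zero.mp h0
  calc h = (g u u)⁻¹ • (g u u • h) := (inv_smul_smul₀ hgu h).symm
    _ = (h u u / g u u) • g := by rw [h1, smul_smul, div_eq_inv_mul]

theorem exists_eq_smul (hg : IsHyperhermitian I J g) (q : IsQuaternionTriple I J K)
    (hdim : finrank ℝ E = 4) (hnd : ∀ u, (∀ v, g u v = 0) → u = 0)
    {T : E → LinearMap.BilinForm ℝ E} (hT : ∀ u, IsHyperhermitian I J (T u))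
    (hlin : ∀ v w, IsLinearMap ℝ fun u => T u v w) :
    ∃ ω : E →ₗ[ℝ] ℝ, ∀ u v w, T u v w = ω u * g v w := by
  have : Nontrivial E := Module.nontrivial_of_finrank_pos (by rw [hdim]; norm_num)
  obtain ⟨u₀, hu₀⟩ := exists_ne (0 : E)
  have hgu₀ := hg.apply_self_ne_zero q hdim hnd hu₀
  refine ⟨(g u₀ u₀)⁻¹ • IsLinearMap.mk' _ (hlin u₀ u₀), fun u v w => ?_⟩
  rw [hg.eq_smul (hT u) q hdim hgu₀]
  simp [div_eq_inv_mul, mul_comm]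

end IsHyperhermitian

end LinearAlgebra

theorem trace_comp_eq_zero_of_anticommute {k V : Type*} [Field k] [CharZero k] [AddCommGroup V]
    [Module k V] [FiniteDimensional k V] {A B X : V →ₗ[k] V} (hB : ∀ v, B (B v) = -v)
    (hAB : ∀ v, B (A v) = -A (B v)) (hXB : ∀ v, X (B v) = B (X v)) :
    LinearMap.trace k V (A ∘ₗ X) = 0 := by
  have hconj : B ∘ₗ (A ∘ₗ X) ∘ₗ B = A ∘ₗ X := by
    ext v
    simp [hXB, hAB, hB]
  have hsq : ((A ∘ₗ X) ∘ₗ B) ∘ₗ B = -(A ∘ₗ X) := by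
    ext v
    simp [hB]
  have h := LinearMap.trace_comp_comm' B ((A ∘ₗ X) ∘ₗ B)
  rw [hconj, hsq, map_neg] at h
  linear_combination (-1 / 2 : k) * h

section Calculus

variable {E F G : Type*} [NormedAddCommGroup E] [NormedSpace ℝ E] [NormedAddCommGroup F]
  [NormedSpace ℝ F] [NormedAddCommGroup G] [NormedSpace ℝ G] {x : E}

theorem fderiv_clm_apply_apply {c : E → F →L[ℝ] G} {a : E → F} (hc : DifferentiableAt ℝ c x)
    (ha : DifferentiableAt ℝ a x) (u : E) :
    fderiv ℝ (fun y => c y (a y)) x u = c x (fderiv ℝ a x u) + fderiv ℝ c x u (a x) := by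
  simp [fderiv_clm_apply hc ha]

theorem fderiv_clm_apply_const {c : E → F →L[ℝ] G} (hc : DifferentiableAt ℝ c x) (v : F)
    (u : E) : fderiv ℝ (fun y => c y v) x u = fderiv ℝ c x u v := by
  simp [fderiv_clm_apply hc (differentiableAt_const v)]

theorem fderiv_clm_apply_const₂ {H : Type*} [NormedAddCommGroup H] [NormedSpace ℝ H]
    {c : E → F →L[ℝ] G →L[ℝ] H} (hc : DifferentiableAt ℝ c x) (v : F) (w : G) (u : E) :
    fderiv ℝ (fun y => c y v w) x u = fderiv ℝ c x u v w := by
  rw [fderiv_clm_apply_const (hc.clm_apply (differentiableAt_const v)),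
    fderiv_clm_apply_const hc]

end Calculus

section Obata

variable {E : Type*} [NormedAddCommGroup E] [NormedSpace ℝ E]

def IsParallelAt (Γ : E → E →L[ℝ] E →L[ℝ] E) (A : E → E →L[ℝ] E) (x : E) : Prop :=
  ∀ u v, fderiv ℝ (fun y => A y v) x u + Γ x u (A x v) = A x (Γ x u v)

/-- If `dA u = [A, Γ u]` for `A = I, J, K`, then `Γ u - obataParticular I J K dI dJ dK u`
commutes with `I, J, K`. -/
def obataParticular (I J K : E →L[ℝ] E) (dI dJ dK : E → E → E) (u v : E) : E :=
  -(1 / 4 : ℝ) • (I (dI u v) + J (dJ u v) + K (dK u v))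

def quaternionicOfSkew (I J K : E →L[ℝ] E) (C : E → E → E) (u v : E) : E :=
  C u v + (1 / 2 : ℝ) • (J (C (J u) v) + K (C (K u) v) - C (J u) (J v) - I (C (K u) (J v)))

def obataChristoffel (I J K : E →L[ℝ] E) (dI dJ dK : E → E → E) (u v : E) : E :=
  obataParticular I J K dI dJ dK u v + quaternionicOfSkew I J K
    (fun a b => obataParticular I J K dI dJ dK b a - obataParticular I J K dI dJ dK a b) u v

variable {I J K : E →L[ℝ] E}

theorem IsQuaternionTriple.eq_quaternionicOfSkew (q : IsQuaternionTriple I J K)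
    {T C : E → E → E} (hTI : ∀ u v, T u (I v) = I (T u v)) (hTJ : ∀ u v, T u (J v) = J (T u v))
    (hC : ∀ u v, T u v - T v u = C u v) (u v : E) : T u v = quaternionicOfSkew I J K C u v := by
  have hTK : ∀ u v, T u (K v) = K (T u v) := fun u v => by rw [← q.IJ, ← q.IJ, hTI, hTJ]
  have hmap : ∀ A : E →L[ℝ] E, (∀ v, A (A v) = -v) → (∀ u v, T u (A v) = A (T u v)) →
      ∀ u v, T (A u) (A v) = -T u v + C u v + A (C (A u) v) := by
    intro A hA hTA u v
    have h1 := hTA (A u) v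
    have h2 := congrArg A (hC (A u) v)
    have h3 : A (T v (A u)) = -T v u := by rw [hTA, hA]
    rw [map_sub] at h2
    linear_combination (norm := module) h1 + h2 + h3 + hC u v
  have hK := hmap K q.K_sq hTK u v
  have hI := hmap I q.I_sq hTI (J u) (J v)
  have hJ := hmap J q.J_sq hTJ u v
  rw [q.IJ, q.IJ] at hI
  unfold quaternionicOfSkew
  linear_combination (norm := module) (1 / 2 : ℝ) • hK - (1 / 2 : ℝ) • hI + (1 / 2 : ℝ) • hJ

theorem IsQuaternionTriple.eq_obataChristoffel (q : IsQuaternionTriple I J K)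
    {dI dJ dK : E → E → E} {Γ : E →L[ℝ] E →L[ℝ] E} (hΓ : ∀ u v, Γ u v = Γ v u)
    (hI : ∀ u v, dI u v + Γ u (I v) = I (Γ u v)) (hJ : ∀ u v, dJ u v + Γ u (J v) = J (Γ u v))
    (hK : ∀ u v, dK u v + Γ u (K v) = K (Γ u v)) (u v : E) :
    Γ u v = obataChristoffel I J K dI dJ dK u v := by
  set B := obataParticular I J K dI dJ dK
  have hB : ∀ u v, B u v = (1 / 4 : ℝ) • ((3 : ℝ) • Γ u v + I (Γ u (I v)) + J (Γ u (J v))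
      + K (Γ u (K v))) := fun u v => by
    simp only [B, obataParticular, eq_sub_of_add_eq (hI u v), eq_sub_of_add_eq (hJ u v),
      eq_sub_of_add_eq (hK u v), map_sub, q.I_sq, q.J_sq, q.K_sq]
    module
  have hTI : ∀ u v, Γ u (I v) - B u (I v) = I (Γ u v - B u v) := fun u v => by
    simp only [hB, map_add, map_sub, map_smul, map_neg, q.I_sq, q.IJ, q.JI, q.IK, q.KI]
    module
  have hTJ : ∀ u v, Γ u (J v) - B u (J v) = J (Γ u v - B u v) := fun u v => by
    simp only [hB, map_add, map_sub, map_smul, map_neg, q.J_sq, q.IJ, q.JI, q.JK, q.KJ]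
    module
  have hT := q.eq_quaternionicOfSkew (T := fun u v => Γ u v - B u v)
    (C := fun a b => B b a - B a b) hTI hTJ (fun u v => by rw [hΓ v u]; abel) u v
  rw [obataChristoffel, ← hT]
  abel

end Obata

section ObataOn

variable {E : Type*} [NormedAddCommGroup E] [NormedSpace ℝ E] {U : Set E} {x : E}
  {I J K : E → E →L[ℝ] E} {Γ : E → E →L[ℝ] E →L[ℝ] E}

theorem IsHypercomplexOn.isQuaternionTriple (hhc : IsHypercomplexOn U I J K) (hx : x ∈ U) :
    IsQuaternionTriple (I x) (J x) (K x) :=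
  ⟨hhc.acsI.square x hx, hhc.acsJ.square x hx, hhc.mulIJ x hx, hhc.mulJI x hx⟩

theorem IsAcsOn.contDiffAt {A : E → E →L[ℝ] E} (hA : IsAcsOn U A) (hU : IsOpen U) (hx : x ∈ U) :
    ContDiffAt ℝ (⊤ : ℕ∞) A x :=
  hA.smooth.contDiffAt (hU.mem_nhds hx)

theorem IsAcsOn.differentiableAt {A : E → E →L[ℝ] E} (hA : IsAcsOn U A) (hU : IsOpen U)
    (hx : x ∈ U) : DifferentiableAt ℝ A x :=
  (hA.contDiffAt hU hx).differentiableAt (by simp)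

theorem IsObataOn.apply_eq_obataChristoffel (hOb : IsObataOn U I J K Γ) (hU : IsOpen U)
    (hhc : IsHypercomplexOn U I J K) (hx : x ∈ U) (u v : E) :
    Γ x u v = obataChristoffel (I x) (J x) (K x) (fun a b => fderiv ℝ I x a b)
      (fun a b => fderiv ℝ J x a b) (fun a b => fderiv ℝ K x a b) u v := by
  refine (hhc.isQuaternionTriple hx).eq_obataChristoffel (hOb.torsionFree x hx)
    (fun a b => ?_) (fun a b => ?_) (fun a b => ?_) u v
  · rw [← fderiv_clm_apply_const (hhc.acsI.differentiableAt hU hx)]; exact hOb.parI x hx a b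
  · rw [← fderiv_clm_apply_const (hhc.acsJ.differentiableAt hU hx)]; exact hOb.parJ x hx a b
  · rw [← fderiv_clm_apply_const (hhc.acsK.differentiableAt hU hx)]; exact hOb.parK x hx a b

theorem IsObataOn.contDiffOn [FiniteDimensional ℝ E] (hOb : IsObataOn U I J K Γ)
    (hU : IsOpen U) (hhc : IsHypercomplexOn U I J K) : ContDiffOn ℝ (⊤ : ℕ∞) Γ U := by
  have hD : ∀ {A : E → E →L[ℝ] E}, IsAcsOn U A → ∀ x ∈ U, ContDiffAt ℝ (⊤ : ℕ∞) (fderiv ℝ A) x :=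
    fun hA x hx => (hA.smooth.fderiv_of_isOpen hU (by simp)).contDiffAt (hU.mem_nhds hx)
  have hformula : ∀ u v, ContDiffOn ℝ (⊤ : ℕ∞) (fun x => obataChristoffel (I x) (J x) (K x)
      (fun a b => fderiv ℝ I x a b) (fun a b => fderiv ℝ J x a b)
      (fun a b => fderiv ℝ K x a b) u v) U := by
    intro u v x hx
    have hI := hhc.acsI.contDiffAt hU hx
    have hJ := hhc.acsJ.contDiffAt hU hx
    have hK := hhc.acsK.contDiffAt hU hx
    have hdI := hD hhc.acsI x hx
    have hdJ := hD hhc.acsJ x hx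
    have hdK := hD hhc.acsK x hx
    refine ContDiffAt.contDiffWithinAt ?_
    simp only [obataChristoffel, quaternionicOfSkew, obataParticular]
    fun_prop
  exact contDiffOn_clm_apply.mpr fun u => contDiffOn_clm_apply.mpr fun v =>
    (hformula u v).congr fun x hx => hOb.apply_eq_obataChristoffel hU hhc hx u v

end ObataOn

section Curvature

variable {E : Type*} [NormedAddCommGroup E] [NormedSpace ℝ E] {Γ : E → E →L[ℝ] E →L[ℝ] E}
  {x : E}

theorem curv_swap (Γ : E → E →L[ℝ] E →L[ℝ] E) (x u v w : E) :
    curv Γ x v u w = -curv Γ x u v w := by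
  simp only [curv]
  abel

theorem curv_eq_fderiv (hΓ : DifferentiableAt ℝ Γ x) (u v w : E) :
    curv Γ x u v w = fderiv ℝ Γ x u v w - fderiv ℝ Γ x v u w + Γ x u (Γ x v w)
      - Γ x v (Γ x u w) := by
  rw [curv, fderiv_clm_apply_const₂ hΓ, fderiv_clm_apply_const₂ hΓ]

theorem curv_add_curv_add_curv (htf : ∀ᶠ y in 𝓝 x, ∀ u v, Γ y u v = Γ y v u) (u v w : E) :
    curv Γ x u v w + curv Γ x v w u + curv Γ x w u v = 0 := by
  have hD : ∀ a b c : E, fderiv ℝ (fun y => Γ y b c) x a = fderiv ℝ (fun y => Γ y c b) x a :=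
    fun a b c => by rw [Filter.EventuallyEq.fderiv_eq (htf.mono fun y hy => hy b c)]
  have hx := htf.self_of_nhds
  simp only [curv, hD u w v, hD v u w, hD w v u, hx v u, hx w u, hx w v]
  abel

/-- `R(v, w)`, written with `fderiv ℝ Γ x` so that it is a linear map for every `Γ`. -/
def curvatureEndo (Γ : E → E →L[ℝ] E →L[ℝ] E) (x v w : E) : E →L[ℝ] E :=
  fderiv ℝ Γ x v w - fderiv ℝ Γ x w v + (Γ x v).comp (Γ x w) - (Γ x w).comp (Γ x v)

theorem curvatureEndo_apply (hΓ : DifferentiableAt ℝ Γ x) (v w z : E) :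
    curvatureEndo Γ x v w z = curv Γ x v w z := by
  simp [curvatureEndo, curv_eq_fderiv hΓ]

theorem fderiv_fderiv_eq_of_isParallelAt {A : E → E →L[ℝ] E} (hΓ : DifferentiableAt ℝ Γ x)
    (hA : ContDiffAt ℝ 2 A x) (hpar : ∀ᶠ y in 𝓝 x, IsParallelAt Γ A y) (a b w : E) :
    fderiv ℝ (fderiv ℝ A) x b a w + Γ x a (fderiv ℝ A x b w) + fderiv ℝ Γ x b a (A x w)
      = A x (fderiv ℝ Γ x b a w) + fderiv ℝ A x b (Γ x a w) := by
  have hAd : DifferentiableAt ℝ A x := hA.differentiableAt (by norm_num)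
  have hDA : DifferentiableAt ℝ (fderiv ℝ A) x :=
    (hA.fderiv_right (m := 1) (by norm_num)).differentiableAt (by norm_num)
  have hΓa : DifferentiableAt ℝ (fun y => Γ y a) x := hΓ.clm_apply (differentiableAt_const a)
  have hAw : DifferentiableAt ℝ (fun y => A y w) x := hAd.clm_apply (differentiableAt_const w)
  have heq : (fun y => fderiv ℝ A y a w + Γ y a (A y w)) =ᶠ[𝓝 x] fun y => A y (Γ y a w) := by
    filter_upwards [hpar, hA.eventually (by simp)] with y hpy hAy
    rw [← fderiv_clm_apply_const (hAy.differentiableAt (by norm_num))]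
    exact hpy a w
  have h := DFunLike.congr_fun (heq.fderiv_eq (𝕜 := ℝ)) b
  rw [fderiv_fun_add ((hDA.clm_apply (differentiableAt_const a)).clm_apply
      (differentiableAt_const w)) (hΓa.clm_apply hAw), add_apply,
    fderiv_clm_apply_const₂ hDA, fderiv_clm_apply_apply hΓa hAw,
    fderiv_clm_apply_apply hAd ((hΓa.clm_apply (differentiableAt_const w))),
    fderiv_clm_apply_const hAd, fderiv_clm_apply_const hΓ, fderiv_clm_apply_const₂ hΓ] at h
  linear_combination (norm := module) h

theorem curv_map_of_isParallelAt {A : E → E →L[ℝ] E} (hΓ : DifferentiableAt ℝ Γ x)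
    (hA : ContDiffAt ℝ 2 A x) (hpar : ∀ᶠ y in 𝓝 x, IsParallelAt Γ A y) (u v w : E) :
    curv Γ x u v (A x w) = A x (curv Γ x u v w) := by
  have hp : ∀ a b, Γ x a (A x b) = A x (Γ x a b) - fderiv ℝ A x a b := fun a b => by
    rw [← hpar.self_of_nhds a b, fderiv_clm_apply_const (hA.differentiableAt (by norm_num))]
    abel
  have hsymm : fderiv ℝ (fderiv ℝ A) x u v w = fderiv ℝ (fderiv ℝ A) x v u w := by
    rw [(hA.isSymmSndFDerivAt (by simp)).eq u v]
  have huv := fderiv_fderiv_eq_of_isParallelAt hΓ hA hpar v u w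
  have hvu := fderiv_fderiv_eq_of_isParallelAt hΓ hA hpar u v w
  rw [curv_eq_fderiv hΓ, curv_eq_fderiv hΓ]
  simp only [hp, map_add, map_sub]
  linear_combination (norm := module) huv - hvu - hsymm

theorem ricci_map_map (b : Basis (Fin 4) ℝ E) {A B : E →L[ℝ] E} (hΓ : DifferentiableAt ℝ Γ x)
    (htf : ∀ᶠ y in 𝓝 x, ∀ u v, Γ y u v = Γ y v u) (hA : ∀ z, A (A z) = -z)
    (hB : ∀ z, B (B z) = -z) (hAB : ∀ z, B (A z) = -A (B z))
    (hcA : ∀ u v w, curv Γ x u v (A w) = A (curv Γ x u v w))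
    (hcB : ∀ u v w, curv Γ x u v (B w) = B (curv Γ x u v w)) (v w : E) :
    ricci Γ b x (A v) (A w) = -ricci Γ b x w v := by
  have : FiniteDimensional ℝ E := Module.Finite.of_basis b
  have hcurv : ∀ u, curv Γ x u (A v) (A w)
      = -A (curvatureEndo Γ x (A v) w u) - curv Γ x u w v := by
    intro u
    have hbianchi := curv_add_curv_add_curv htf u (A v) w
    rw [hcA] at hbianchi
    rw [hcA, curvatureEndo_apply hΓ, eq_sub_of_add_eq (eq_neg_of_add_eq_zero_left hbianchi),
      map_sub, map_neg, hA, curv_swap]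
    abel
  have htr : LinearMap.trace ℝ E ((A : E →ₗ[ℝ] E) ∘ₗ (curvatureEndo Γ x (A v) w : E →ₗ[ℝ] E))
      = 0 :=
    trace_comp_eq_zero_of_anticommute hB hAB fun z => by
      simp only [ContinuousLinearMap.coe_coe, curvatureEndo_apply hΓ, hcB]
  rw [LinearMap.trace_eq_matrix_trace ℝ b] at htr
  simp only [ricci, hcurv, map_sub, map_neg, Finsupp.coe_sub, Finsupp.coe_neg, Pi.sub_apply,
    Pi.neg_apply, Finset.sum_sub_distrib, Finset.sum_neg_distrib]
  simp only [Matrix.trace, Matrix.diag_apply, LinearMap.toMatrix_apply, LinearMap.coe_comp,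
    Function.comp_apply, ContinuousLinearMap.coe_coe] at htr
  rw [htr]
  ring

theorem ricci_add_ricci_swap (b : Basis (Fin 4) ℝ E) {I J K : E →L[ℝ] E}
    (q : IsQuaternionTriple I J K) (hΓ : DifferentiableAt ℝ Γ x)
    (htf : ∀ᶠ y in 𝓝 x, ∀ u v, Γ y u v = Γ y v u)
    (hcI : ∀ u v w, curv Γ x u v (I w) = I (curv Γ x u v w))
    (hcJ : ∀ u v w, curv Γ x u v (J w) = J (curv Γ x u v w))
    (hcK : ∀ u v w, curv Γ x u v (K w) = K (curv Γ x u v w)) (v w : E) :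
    ricci Γ b x v w + ricci Γ b x w v = 0 := by
  have hIJ := ricci_map_map b hΓ htf q.I_sq q.J_sq (fun z => by rw [q.JI, q.IJ]) hcI hcJ
    (J v) (J w)
  have hJK := ricci_map_map b hΓ htf q.J_sq q.K_sq (fun z => by rw [q.KJ, q.JK]) hcJ hcK w v
  have hKI := ricci_map_map b hΓ htf q.K_sq q.I_sq (fun z => by rw [q.IK, q.KI]) hcK hcI v w
  rw [q.IJ, q.IJ] at hIJ
  linarith

variable {U : Set E} {I J K : E → E →L[ℝ] E}

theorem IsObataOn.ricci_add_ricci_swap [FiniteDimensional ℝ E] (hOb : IsObataOn U I J K Γ)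
    (hU : IsOpen U) (hhc : IsHypercomplexOn U I J K) (hx : x ∈ U) (b : Basis (Fin 4) ℝ E)
    (v w : E) : ricci Γ b x v w + ricci Γ b x w v = 0 := by
  have hΓ : DifferentiableAt ℝ Γ x :=
    ((hOb.contDiffOn hU hhc).contDiffAt (hU.mem_nhds hx)).differentiableAt (by simp)
  have hcurv : ∀ {A : E → E →L[ℝ] E}, IsAcsOn U A → (∀ y ∈ U, IsParallelAt Γ A y) →
      ∀ u v w, curv Γ x u v (A x w) = A x (curv Γ x u v w) := fun hA hpar =>
    curv_map_of_isParallelAt hΓ ((hA.contDiffAt hU hx).of_le (by norm_cast))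
      (Filter.eventually_of_mem (hU.mem_nhds hx) hpar)
  exact HKTPaper.ricci_add_ricci_swap b (hhc.isQuaternionTriple hx) hΓ
    (Filter.eventually_of_mem (hU.mem_nhds hx) hOb.torsionFree)
    (hcurv hhc.acsI hOb.parI) (hcurv hhc.acsJ hOb.parJ) (hcurv hhc.acsK hOb.parK) v w

end Curvature

section CovariantDerivative

variable {E : Type*} [NormedAddCommGroup E] [NormedSpace ℝ E] {Γ : E → E →L[ℝ] E →L[ℝ] E}
  {x : E}

def covDeriv₂ (Γ : E → E →L[ℝ] E →L[ℝ] E) (F : E → E → E → ℝ) (x u v w : E) : ℝ :=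
  fderiv ℝ (fun y => F y v w) x u - F x (Γ x u v) w - F x v (Γ x u w)

theorem covDeriv₂_congr {F F' : E → E → E → ℝ} (h : ∀ᶠ y in 𝓝 x, F y = F' y) :
    covDeriv₂ Γ F x = covDeriv₂ Γ F' x := by
  ext u v w
  simp only [covDeriv₂, h.self_of_nhds,
    Filter.EventuallyEq.fderiv_eq (h.mono fun y hy => congrFun (congrFun hy v) w)]

theorem covDeriv₂_eq {G : E → E →L[ℝ] E →L[ℝ] ℝ} (hG : DifferentiableAt ℝ G x) (u v w : E) :
    covDeriv₂ Γ (fun y v w => G y v w) x u v w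
      = fderiv ℝ G x u v w - G x (Γ x u v) w - G x v (Γ x u w) := by
  rw [covDeriv₂, fderiv_clm_apply_const₂ hG]

theorem covDeriv₂_flip (F : E → E → E → ℝ) (u v w : E) :
    covDeriv₂ Γ (fun y v w => F y w v) x u v w = covDeriv₂ Γ F x u w v := by
  simp only [covDeriv₂]
  ring

theorem d2_eq_covDeriv₂ {F : E → E → E → ℝ} (hΓ : ∀ u v, Γ x u v = Γ x v u)
    (hF : ∀ v w, F x v w = -F x w v) (u v w : E) :
    d2 F x u v w = covDeriv₂ Γ F x u v w - covDeriv₂ Γ F x v u w + covDeriv₂ Γ F x w u v := by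
  simp only [d2, covDeriv₂, hΓ v u, hΓ w u, hΓ w v, hF v (Γ x u w)]
  ring

theorem isParallelAt_id : IsParallelAt Γ (fun _ => ContinuousLinearMap.id ℝ E) x := by
  simp [IsParallelAt]

theorem covDeriv₂_comp {G : E → E →L[ℝ] E →L[ℝ] ℝ} {A B : E → E →L[ℝ] E}
    (hG : DifferentiableAt ℝ G x) (hA : DifferentiableAt ℝ A x) (hB : DifferentiableAt ℝ B x)
    (hpA : IsParallelAt Γ A x) (hpB : IsParallelAt Γ B x) (u v w : E) :
    covDeriv₂ Γ (fun y v w => G y (A y v) (B y w)) x u v w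
      = covDeriv₂ Γ (fun y v w => G y v w) x u (A x v) (B x w) := by
  have hAv : DifferentiableAt ℝ (fun y => A y v) x := hA.clm_apply (differentiableAt_const v)
  have hBw : DifferentiableAt ℝ (fun y => B y w) x := hB.clm_apply (differentiableAt_const w)
  have hpA' := hpA u v
  have hpB' := hpB u w
  rw [fderiv_clm_apply_const hA] at hpA'
  rw [fderiv_clm_apply_const hB] at hpB'
  simp only [covDeriv₂, fderiv_clm_apply_apply (hG.clm_apply hAv) hBw,
    fderiv_clm_apply_apply hG hAv, fderiv_clm_apply_const hA, fderiv_clm_apply_const hB,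
    fderiv_clm_apply_const₂ hG, add_apply, ← hpA', ← hpB', map_add]
  ring

theorem covDeriv₂_symm {F : E → E → E → ℝ} (hF : ∀ᶠ y in 𝓝 x, ∀ v w, F y v w = F y w v)
    (u v w : E) : covDeriv₂ Γ F x u v w = covDeriv₂ Γ F x u w v := by
  rw [← covDeriv₂_flip, covDeriv₂_congr (hF.mono fun y hy => funext₂ hy)]

theorem covDeriv₂_map_map {G : E → E →L[ℝ] E →L[ℝ] ℝ} {A : E → E →L[ℝ] E}
    (hG : DifferentiableAt ℝ G x) (hA : DifferentiableAt ℝ A x) (hpA : IsParallelAt Γ A x)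
    (hGA : ∀ᶠ y in 𝓝 x, ∀ u v, G y (A y u) (A y v) = G y u v) (u v w : E) :
    covDeriv₂ Γ (fun y v w => G y v w) x u (A x v) (A x w)
      = covDeriv₂ Γ (fun y v w => G y v w) x u v w := by
  rw [← covDeriv₂_comp hG hA hA hpA hpA, covDeriv₂_congr (hGA.mono fun y hy => funext₂ hy)]

theorem isLinearMap_covDeriv₂ (G : E → E →L[ℝ] E →L[ℝ] ℝ) (v w : E) :
    IsLinearMap ℝ fun u => covDeriv₂ Γ (fun y v w => G y v w) x u v w := by
  constructor <;> intros <;> simp only [covDeriv₂, map_add, map_smul, add_apply,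
    smul_apply, smul_eq_mul] <;> ring

theorem isBilinearMap_covDeriv₂ {G : E → E →L[ℝ] E →L[ℝ] ℝ} (hG : DifferentiableAt ℝ G x)
    (u : E) : IsBilinearMap ℝ (covDeriv₂ Γ (fun y v w => G y v w) x u) := by
  constructor <;> intros <;> simp only [covDeriv₂_eq hG, map_add, map_smul,
    add_apply, smul_apply, smul_eq_mul] <;> ring

end CovariantDerivative

section Metric

variable {E : Type*} [NormedAddCommGroup E] [NormedSpace ℝ E] [FiniteDimensional ℝ E]
  {U : Set E} {x : E} {I J K : E → E →L[ℝ] E} {g : E → E →ₗ[ℝ] E →ₗ[ℝ] ℝ}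
  {Γ : E → E →L[ℝ] E →L[ℝ] E}

theorem IsHyperHermitianOn.differentiableAt (hherm : IsHyperHermitianOn U I J K g)
    (hU : IsOpen U) (hx : x ∈ U) :
    DifferentiableAt ℝ (fun y => (g y).toContinuousBilinearMap) x := by
  have : ContDiffOn ℝ (⊤ : ℕ∞) (fun y => (g y).toContinuousBilinearMap) U :=
    contDiffOn_clm_apply.mpr fun v => contDiffOn_clm_apply.mpr fun w => hherm.smooth v w
  exact (this.contDiffAt (hU.mem_nhds hx)).differentiableAt (by simp)

theorem IsHyperHermitianOn.exists_covDeriv₂_eq_smul (hherm : IsHyperHermitianOn U I J K g)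
    (hdim : finrank ℝ E = 4) (hU : IsOpen U) (hhc : IsHypercomplexOn U I J K)
    (hOb : IsObataOn U I J K Γ) (hx : x ∈ U) :
    ∃ ω : E →ₗ[ℝ] ℝ, ∀ u v w, covDeriv₂ Γ (fun y v w => g y v w) x u v w = ω u * g x v w := by
  have hg := hherm.differentiableAt hU hx
  have eventually {p : E → Prop} (hp : ∀ y ∈ U, p y) : ∀ᶠ y in 𝓝 x, p y :=
    Filter.eventually_of_mem (hU.mem_nhds hx) hp
  exact IsHyperhermitian.exists_eq_smul ⟨hherm.symm x hx, hherm.hermI x hx, hherm.hermJ x hx⟩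
    (hhc.isQuaternionTriple hx) hdim (hherm.nondeg x hx)
    (T := fun u => (isBilinearMap_covDeriv₂ hg u).toLinearMap)
    (fun u => ⟨covDeriv₂_symm (eventually hherm.symm) u,
      covDeriv₂_map_map hg (hhc.acsI.differentiableAt hU hx) (hOb.parI x hx)
        (eventually hherm.hermI) u,
      covDeriv₂_map_map hg (hhc.acsJ.differentiableAt hU hx) (hOb.parJ x hx)
        (eventually hherm.hermJ) u⟩)
    (fun v w => isLinearMap_covDeriv₂ _ v w)

theorem d2_kaehlerForm_eq_wedge12 {A : E → E →L[ℝ] E} {ω : E → E →ₗ[ℝ] ℝ}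
    (hg : DifferentiableAt ℝ (fun y => (g y).toContinuousBilinearMap) x)
    (hA : DifferentiableAt ℝ A x) (hpA : IsParallelAt Γ A x) (hΓ : ∀ u v, Γ x u v = Γ x v u)
    (hsymm : ∀ u v, g x u v = g x v u) (hgA : ∀ u v, g x (A x u) (A x v) = g x u v)
    (hA2 : ∀ v, A x (A x v) = -v)
    (hω : ∀ u v w, covDeriv₂ Γ (fun y v w => g y v w) x u v w = ω x u * g x v w)
    (u v w : E) :
    d2 (kaehlerForm A g) x u v w = wedge12 (fun y p => ω y p) (kaehlerForm A g) x u v w := by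
  have hskew : ∀ v w, kaehlerForm A g x v w = -kaehlerForm A g x w v := fun v w => by
    rw [kaehlerForm, kaehlerForm, ← hgA, hA2, map_neg, LinearMap.neg_apply, hsymm]
  have hcov : ∀ a b c, covDeriv₂ Γ (kaehlerForm A g) x a b c = ω x a * kaehlerForm A g x b c :=
    fun a b c => (covDeriv₂_comp hg hA (differentiableAt_const _) hpA isParallelAt_id a b c).trans
      (hω a (A x b) c)
  rw [d2_eq_covDeriv₂ hΓ hskew, hcov, hcov, hcov]
  rfl

end Metric

variable {E : Type*} [NormedAddCommGroup E] [NormedSpace ℝ E] [FiniteDimensional ℝ E]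

/-- On a 4-dimensional hypercomplex manifold `(M,I,J,K)`, every
hyperhermitian metric `g` is Einstein–Weyl with respect to the Obata connection: there is a
1-form `ω` with `∇^Ob g = ω ⊗ g` and the symmetrised Ricci tensor of `∇^Ob` proportional to
`g`; consequently `dF_I = ω ∧ F_I`, `dF_J = ω ∧ F_J` and `dF_K = ω ∧ F_K`. -/
theorem hyperhermitian_dim_four_einstein_weyl_obata
    (hdim : Module.finrank ℝ E = 4)
    (U : Set E) (hU : IsOpen U) (I J K : E → E →L[ℝ] E) (g : E → E →ₗ[ℝ] E →ₗ[ℝ] ℝ)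
    (hhc : IsHypercomplexOn U I J K) (hherm : IsHyperHermitianOn U I J K g)
    (ΓOb : E → E →L[ℝ] E →L[ℝ] E) (hOb : IsObataOn U I J K ΓOb) :
    ∃ ω : E → E →ₗ[ℝ] ℝ,
      (∀ x ∈ U, ∀ u v w,
        fderiv ℝ (fun y => g y v w) x u - g x (ΓOb x u v) w - g x v (ΓOb x u w)
          = ω x u * g x v w) ∧
      (∃ Λ : E → ℝ, ∀ x ∈ U, ∀ b : Module.Basis (Fin 4) ℝ E, ∀ v w,
        (1 / 2) * (ricci ΓOb b x v w + ricci ΓOb b x w v) = Λ x * g x v w) ∧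
      (∀ x ∈ U, ∀ u v w, d2 (kaehlerForm I g) x u v w
          = wedge12 (fun y p => ω y p) (kaehlerForm I g) x u v w) ∧
      (∀ x ∈ U, ∀ u v w, d2 (kaehlerForm J g) x u v w
          = wedge12 (fun y p => ω y p) (kaehlerForm J g) x u v w) ∧
      (∀ x ∈ U, ∀ u v w, d2 (kaehlerForm K g) x u v w
          = wedge12 (fun y p => ω y p) (kaehlerForm K g) x u v w) := by
  choose! ω hω using fun x (hx : x ∈ U) => hherm.exists_covDeriv₂_eq_smul hdim hU hhc hOb hx
  have hdF : ∀ {A : E → E →L[ℝ] E}, IsAcsOn U A →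
      (∀ x ∈ U, ∀ u v, g x (A x u) (A x v) = g x u v) → (∀ x ∈ U, IsParallelAt ΓOb A x) →
      ∀ x ∈ U, ∀ u v w, d2 (kaehlerForm A g) x u v w
        = wedge12 (fun y p => ω y p) (kaehlerForm A g) x u v w :=
    fun hA hgA hpA x hx => d2_kaehlerForm_eq_wedge12 (hherm.differentiableAt hU hx)
      (hA.differentiableAt hU hx) (hpA x hx) (hOb.torsionFree x hx) (hherm.symm x hx)
      (hgA x hx) (hA.square x hx) (hω x hx)
  refine ⟨ω, hω, ⟨0, fun x hx b v w => ?_⟩, hdF hhc.acsI hherm.hermI hOb.parI,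
    hdF hhc.acsJ hherm.hermJ hOb.parJ, hdF hhc.acsK hherm.hermK hOb.parK⟩
  rw [hOb.ricci_add_ricci_swap hU hhc hx b v w]
  simp

end HKTPaper
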